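/- arXiv:1207.5319 — 8 statements merged into one kernel-verified Lean document; each statement's English description precedes it below -/
import Mathlib

section
/- For all reals Sc ≥ 0, Sp ≥ 0, Ip ≥ 0, C > 0 with C ≥ min(Ip,Sp)·(1+max(Ip,Sp)): log₂(1 + Sc) − log₂(1 + Sc/(1 + Sp·Ip/C)) ≤ 1. -/
theorem stmt_8 (Sc Sp Ip C : ℝ) (hSc : 0 ≤ Sc) (hSp : 0 ≤ Sp) (hIp : 0 ≤ Ip)
    (hC : 0 < C) (hCge : min Ip Sp * (1 + max Ip Sp) ≤ C) :
    Real.logb 2 (1 + Sc) - Real.logb 2 (1 + Sc / (1 + Sp * Ip / C)) ≤ 1 := by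
  set t := Sp * Ip / C with ht
  have ht0 : 0 ≤ t := by positivity
  have hprod : Sp * Ip ≤ C := by
    have h1 : Sp * Ip = min Ip Sp * max Ip Sp := by
      rw [min_mul_max]; ring
    have h2 : min Ip Sp * max Ip Sp ≤ min Ip Sp * (1 + max Ip Sp) := by
      have := le_min hIp hSp
      nlinarith [le_max_left Ip Sp]
    linarith
  have ht1 : t ≤ 1 := by
    rw [ht, div_le_one hC]; exact hprod
  have hpos : (0:ℝ) < 1 + Sc / (1 + t) := by positivity
  have hkey : 1 + Sc ≤ 2 * (1 + Sc / (1 + t)) := by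
    have h : Sc ≤ 2 * (Sc / (1 + t)) := by
      rw [mul_div_assoc', le_div_iff₀ (by linarith : (0:ℝ) < 1 + t)]
      nlinarith
    linarith
  have h2 : Real.logb 2 (1 + Sc) ≤ Real.logb 2 (2 * (1 + Sc / (1 + t))) :=
    (Real.logb_le_logb (b := 2) (by norm_num) (by linarith : (0:ℝ) < 1 + Sc) (by positivity)).mpr hkey
  rw [Real.logb_mul (by norm_num) (ne_of_gt hpos), Real.logb_self_eq_one (by norm_num : (1:ℝ) < 2)] at h2
  linarith
end

section
/- For all real numbers S and I with 1 ≤ I ≤ S: log₂((1+S)/(1+I)) + log₂(1 + (√S + √I)²) − log₂(1 + S/(2I)) − log₂((S + I + 1)/2) ≤ 3. -/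
theorem stmt_9 (S I : ℝ) (hI : 1 ≤ I) (hIS : I ≤ S) :
    Real.logb 2 ((1 + S) / (1 + I)) + Real.logb 2 (1 + (Real.sqrt S + Real.sqrt I) ^ 2)
      - Real.logb 2 (1 + S / (2 * I)) - Real.logb 2 ((S + I + 1) / 2) ≤ 3 := by
  have hI0 : (0:ℝ) < I := by linarith
  have hS0 : (0:ℝ) < S := by linarith
  have hsS : Real.sqrt S ^ 2 = S := Real.sq_sqrt hS0.le
  have hsI : Real.sqrt I ^ 2 = I := Real.sq_sqrt hI0.le
  have hA : (0:ℝ) < (1 + S) / (1 + I) := by positivity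
  have hB : (0:ℝ) < 1 + (Real.sqrt S + Real.sqrt I) ^ 2 := by positivity
  have hC : (0:ℝ) < 1 + S / (2 * I) := by positivity
  have hD : (0:ℝ) < (S + I + 1) / 2 := by positivity
  have key : (1 + S) / (1 + I) * (1 + (Real.sqrt S + Real.sqrt I) ^ 2)
      ≤ 8 * ((1 + S / (2 * I)) * ((S + I + 1) / 2)) := by
    rw [div_mul_eq_mul_div, div_le_iff₀ (by linarith : (0:ℝ) < 1 + I)]
    have h2 : 2 * (Real.sqrt S * Real.sqrt I) ≤ S + I := by
      nlinarith [sq_nonneg (Real.sqrt S - Real.sqrt I)]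
    have hdiv : S / (2 * I) ≥ 0 := by positivity
    have hSI : S / (2 * I) * (2 * I) = S := by field_simp
    nlinarith [mul_pos hI0 hS0, sq_nonneg (Real.sqrt S + Real.sqrt I),
      mul_nonneg hdiv (by positivity : (0:ℝ) ≤ I * (S + I + 1)),
      mul_nonneg hdiv (by linarith : (0:ℝ) ≤ S + I + 1)]
  have hlog : Real.logb 2 ((1 + S) / (1 + I)) + Real.logb 2 (1 + (Real.sqrt S + Real.sqrt I) ^ 2)
      - Real.logb 2 (1 + S / (2 * I)) - Real.logb 2 ((S + I + 1) / 2)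
      = Real.logb 2 ((1 + S) / (1 + I) * (1 + (Real.sqrt S + Real.sqrt I) ^ 2)
        / ((1 + S / (2 * I)) * ((S + I + 1) / 2))) := by
    conv_rhs => rw [Real.logb_div (by positivity) (by positivity),
      Real.logb_mul hA.ne' hB.ne', Real.logb_mul hC.ne' hD.ne']
    ring
  rw [hlog]
  have h8 : (1 + S) / (1 + I) * (1 + (Real.sqrt S + Real.sqrt I) ^ 2)
      / ((1 + S / (2 * I)) * ((S + I + 1) / 2)) ≤ 8 := by
    rw [div_le_iff₀ (by positivity)]
    linarith
  calc Real.logb 2 _ ≤ Real.logb 2 8 :=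
        Real.logb_le_logb_of_le (by norm_num) (by positivity) h8
    _ = 3 := by
        rw [show (8:ℝ) = 2 ^ (3:ℝ) by norm_num, Real.logb_rpow (by norm_num) (by norm_num)]
end

section
/- For all real numbers S, I, C with 1 ≤ I ≤ C and C·(I+1) ≤ S: log₂((1+S)/(1+I)) + log₂(1 + (√S+√I)²) − log₂(1 + S/(2I)) − log₂((1+C)/(I+C)) − log₂((S+I²+I)/2) ≤ 4. -/
theorem stmt_10 (S I C : ℝ) (hI : 1 ≤ I) (hIC : I ≤ C) (hCS : C * (I + 1) ≤ S) :
    Real.logb 2 ((1 + S) / (1 + I)) + Real.logb 2 (1 + (Real.sqrt S + Real.sqrt I) ^ 2)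
      - Real.logb 2 (1 + S / (2 * I)) - Real.logb 2 ((1 + C) / (I + C))
      - Real.logb 2 ((S + I ^ 2 + I) / 2) ≤ 4 := by
  have hI0 : (0:ℝ) < I := by linarith
  have hC0 : (0:ℝ) < C := by linarith
  have hS2 : (2:ℝ) ≤ S := by nlinarith
  have hS0 : (0:ℝ) < S := by linarith
  set b : ℝ := 1 + (Real.sqrt S + Real.sqrt I) ^ 2 with hbdef
  have hb0 : 0 < b := by positivity
  have hb : b ≤ 2 * (1 + S + I) := by
    have h1 : (Real.sqrt S + Real.sqrt I) ^ 2
        = S + 2 * (Real.sqrt S * Real.sqrt I) + I := by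
      rw [add_sq, Real.sq_sqrt hS0.le, Real.sq_sqrt hI0.le]; ring
    have h2 : 2 * (Real.sqrt S * Real.sqrt I) ≤ S + I := by
      nlinarith [sq_nonneg (Real.sqrt S - Real.sqrt I), Real.sq_sqrt hS0.le,
        Real.sq_sqrt hI0.le]
    rw [hbdef, h1]; linarith
  have hA : (0:ℝ) < (1 + S) / (1 + I) := by positivity
  have hc : (0:ℝ) < 1 + S / (2 * I) := by positivity
  have hd : (0:ℝ) < (1 + C) / (I + C) := by positivity
  have he : (0:ℝ) < (S + I ^ 2 + I) / 2 := by positivity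
  have key : (1 + S) / (1 + I) * b / (1 + S / (2 * I)) / ((1 + C) / (I + C))
      / ((S + I ^ 2 + I) / 2) ≤ 16 := by
    have heq : (1 + S) / (1 + I) * b / (1 + S / (2 * I)) / ((1 + C) / (I + C))
        / ((S + I ^ 2 + I) / 2)
        = ((1 + S) * b * (4 * (I * (I + C))))
          / ((1 + I) * ((2 * I + S) * ((1 + C) * (S + I ^ 2 + I)))) := by
      field_simp
      ring
    rw [heq, div_le_iff₀ (by positivity)]
    have p1 : (1 + S) ≤ 2 * I + S := by linarith
    have p2 : (1 + S + I) * I ≤ (1 + I) * (S + I ^ 2 + I) := by nlinarith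
    have k1 : (1 + S) * ((1 + S + I) * I) ≤ (2 * I + S) * ((1 + I) * (S + I ^ 2 + I)) :=
      mul_le_mul p1 p2 (by positivity) (by positivity)
    have u1 : (1 + S) * b * (4 * (I * (I + C)))
        ≤ (1 + S) * (2 * (1 + S + I)) * (4 * (I * (I + C))) := by
      have := mul_le_mul_of_nonneg_left hb (by positivity : (0:ℝ) ≤ 1 + S)
      exact mul_le_mul_of_nonneg_right this (by positivity)
    have u3 : 8 * ((1 + S) * ((1 + S + I) * I)) * (I + C)
        ≤ 8 * ((1 + S) * ((1 + S + I) * I)) * (2 * (1 + C)) := by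
      have hic : I + C ≤ 2 * (1 + C) := by linarith
      exact mul_le_mul_of_nonneg_left hic (by positivity)
    have u2 : (1 + S) * ((1 + S + I) * I) * (16 * (1 + C))
        ≤ (2 * I + S) * ((1 + I) * (S + I ^ 2 + I)) * (16 * (1 + C)) :=
      mul_le_mul_of_nonneg_right k1 (by positivity)
    nlinarith [u1, u2, u3]
  have hlhs : Real.logb 2 ((1 + S) / (1 + I)) + Real.logb 2 b
      - Real.logb 2 (1 + S / (2 * I)) - Real.logb 2 ((1 + C) / (I + C))
      - Real.logb 2 ((S + I ^ 2 + I) / 2)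
      = Real.logb 2 ((1 + S) / (1 + I) * b / (1 + S / (2 * I))
        / ((1 + C) / (I + C)) / ((S + I ^ 2 + I) / 2)) := by
    rw [Real.logb_div (by positivity) he.ne', Real.logb_div (by positivity) hd.ne',
      Real.logb_div (by positivity) hc.ne', Real.logb_mul hA.ne' hb0.ne']
  rw [hlhs]
  have h16 : Real.logb 2 16 = 4 := by
    have : (16:ℝ) = 2 ^ (4:ℕ) := by norm_num
    rw [this, Real.logb_pow, Real.logb_self_eq_one (by norm_num : (1:ℝ) < 2)]
    norm_num
  calc Real.logb 2 _ ≤ Real.logb 2 16 :=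
        Real.logb_le_logb_of_le (by norm_num) (by positivity) key
    _ = 4 := h16
end

section
/- For all real numbers S, I, C with 1 ≤ C ≤ I, I ≤ S, and C·(I+1) ≤ S: log₂(1 + S/I + I) + log₂(2I) + log₂(2 + S/I) − log₂(1 + S/(2I)) − log₂(S + I² + I) ≤ 2. -/
theorem logb_two_sum_rate_gap_eq_two {S I : ℝ} (hI : 0 < I) (hS : 0 ≤ S) :
    Real.logb 2 (1 + S / I + I) + Real.logb 2 (2 * I) + Real.logb 2 (2 + S / I)
      - Real.logb 2 (1 + S / (2 * I)) - Real.logb 2 (S + I ^ 2 + I) = 2 := by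
  have hF : 0 < S + I ^ 2 + I := by positivity
  have hE : 0 < 1 + S / (2 * I) := by positivity
  have hA : 1 + S / I + I = (S + I ^ 2 + I) / I := by field_simp; ring
  have hD : 2 + S / I = 2 * (1 + S / (2 * I)) := by field_simp
  rw [hA, hD, Real.logb_div hF.ne' hI.ne', Real.logb_mul two_ne_zero hI.ne',
    Real.logb_mul two_ne_zero hE.ne', Real.logb_self_eq_one one_lt_two]
  ring

theorem stmt_11_general (S I C : ℝ) (hC : 1 ≤ C) (hCI : C ≤ I) (hIS : I ≤ S) :
    Real.logb 2 (1 + S / I + I) + Real.logb 2 (2 * I) + Real.logb 2 (2 + S / I)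
      - Real.logb 2 (1 + S / (2 * I)) - Real.logb 2 (S + I ^ 2 + I) ≤ 2 := by
  have hI : 0 < I := by linarith
  exact (logb_two_sum_rate_gap_eq_two hI (by linarith)).le

theorem stmt_11 (S I C : ℝ) (hC : 1 ≤ C) (hCI : C ≤ I) (hIS : I ≤ S)
    (hCS : C * (I + 1) ≤ S) :
    Real.logb 2 (1 + S / I + I) + Real.logb 2 (2 * I) + Real.logb 2 (2 + S / I)
      - Real.logb 2 (1 + S / (2 * I)) - Real.logb 2 (S + I ^ 2 + I) ≤ 2 :=
  stmt_11_general S I C hC hCI hIS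
end

section
/- For all real numbers S, I, C with 0 ≤ I ≤ S ≤ C: [log₂((1+S)/(1+I)) + log₂(1+S+I) + 1] − [log₂(1 + S/(1+I)) + log₂((1+S)/(1 + (S/C)·I/(1+I)))] ≤ 2. -/
theorem stmt_12 (S I C : ℝ) (hI : 0 ≤ I) (hIS : I ≤ S) (hSC : S ≤ C) :
    (Real.logb 2 ((1 + S) / (1 + I)) + Real.logb 2 (1 + S + I) + 1)
      - (Real.logb 2 (1 + S / (1 + I))
        + Real.logb 2 ((1 + S) / (1 + (S / C) * I / (1 + I)))) ≤ 2 := by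
  have hS : 0 ≤ S := le_trans hI hIS
  have hC : 0 ≤ C := le_trans hS hSC
  have h1I : (0:ℝ) < 1 + I := by linarith
  have h1S : (0:ℝ) < 1 + S := by linarith
  have h1SI : (0:ℝ) < 1 + S + I := by linarith
  set x : ℝ := S / C * I / (1 + I) with hxdef
  have hx0 : 0 ≤ x := by
    apply div_nonneg _ (le_of_lt h1I)
    exact mul_nonneg (div_nonneg hS hC) hI
  have hSC1 : S / C ≤ 1 := by
    rcases eq_or_lt_of_le hC with h | h
    · have : S = 0 := le_antisymm (h ▸ hSC) hS
      simp [this]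
    · exact (div_le_one h).mpr hSC
  have hI1 : I / (1 + I) ≤ 1 := by
    rw [div_le_one h1I]; linarith
  have hx1 : x ≤ 1 := by
    rw [hxdef, div_le_one h1I]
    calc S / C * I ≤ 1 * I := by
          exact mul_le_mul_of_nonneg_right hSC1 hI
      _ ≤ 1 + I := by linarith
  have h1x : (0:ℝ) < 1 + x := by linarith
  have e1 : 1 + S / (1 + I) = (1 + S + I) / (1 + I) := by
    field_simp; ring
  rw [e1, Real.logb_div h1SI.ne' h1I.ne', Real.logb_div h1S.ne' h1I.ne',
    Real.logb_div h1S.ne' h1x.ne']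
  have hlog : Real.logb 2 (1 + x) ≤ 1 := by
    have := Real.logb_le_logb_of_le (by norm_num : (1:ℝ) < 2) h1x (by linarith : 1 + x ≤ 2)
    simpa using this
  linarith
end

section
/- Let α ≥ 0, β ≥ 0 be fixed. Then the limit as S → ∞ of min( log₂(1 + (√S + √(S^α))²), log₂(1 + S^β + S) ) / log₂(1 + S) equals max(1, min(α, β)). -/
/-!
Both rates are logarithms of quantities within constant factors of `S ^ max 1 γ`
(with `γ = α` for the first and `γ = β` for the second), so each of them is
`max 1 γ * log S + O(1)`, and divided by `log (1 + S) = log S + o(1)` it tends to `max 1 γ`.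
The limit of the minimum is `min (max 1 α) (max 1 β) = max 1 (min α β)`.
-/

open Filter Real Asymptotics Topology

theorem tendsto_div_of_isBigO_sub_mul {ι : Type*} {l : Filter ι} {f g : ι → ℝ} {M : ℝ}
    (hg : Tendsto g l atTop) (hfg : (fun x => f x - M * g x) =O[l] fun _ => (1 : ℝ)) :
    Tendsto (fun x => f x / g x) l (𝓝 M) := by
  have hlittle : (fun x => f x - M * g x) =o[l] g :=
    hfg.trans_isLittleO <| (isLittleO_one_left_iff ℝ).2 <| tendsto_norm_atTop_atTop.comp hg
  have hsum := (tendsto_const_nhds (x := M)).add hlittle.tendsto_div_nhds_zero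
  rw [add_zero] at hsum
  refine hsum.congr' ?_
  filter_upwards [hg.eventually_gt_atTop 0] with x hx
  field_simp
  ring

theorem isBigO_log_sub_log_of_le_of_le {ι : Type*} {l : Filter ι} {f g : ι → ℝ} {c₁ c₂ : ℝ}
    (hc₁ : 0 < c₁) (hfg : ∀ᶠ x in l, 0 < g x ∧ c₁ * g x ≤ f x ∧ f x ≤ c₂ * g x) :
    (fun x => log (f x) - log (g x)) =O[l] fun _ => (1 : ℝ) := by
  refine IsBigO.of_bound (max |log c₁| |log c₂|) ?_
  filter_upwards [hfg] with x ⟨hg, hlow, hhigh⟩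
  have hf : 0 < f x := lt_of_lt_of_le (mul_pos hc₁ hg) hlow
  rw [← log_div hf.ne' hg.ne', norm_one, mul_one, Real.norm_eq_abs]
  have hratio_low : c₁ ≤ f x / g x := (le_div_iff₀ hg).2 hlow
  have hratio_high : f x / g x ≤ c₂ := (div_le_iff₀ hg).2 hhigh
  exact abs_le_max_abs_abs (log_le_log hc₁ hratio_low)
    (log_le_log (hc₁.trans_le hratio_low) hratio_high)

theorem tendsto_log_one_add_sub_log : Tendsto (fun S => log (1 + S) - log S) atTop (𝓝 0) := by
  have hinv : Tendsto (fun S : ℝ => 1 + S⁻¹) atTop (𝓝 1) := by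
    simpa using (tendsto_inv_atTop_zero (𝕜 := ℝ)).const_add 1
  have hlog := (continuousAt_log one_ne_zero).tendsto.comp hinv
  rw [log_one] at hlog
  refine hlog.congr' ?_
  filter_upwards [eventually_gt_atTop 0] with S hS
  rw [Function.comp_apply, ← log_div (by positivity) hS.ne']
  congr 1
  field_simp
  ring

theorem tendsto_log_div_log_one_add_of_le_of_le {f : ℝ → ℝ} {M c₁ c₂ : ℝ} (hc₁ : 0 < c₁)
    (hf : ∀ᶠ S in atTop, c₁ * S ^ M ≤ f S ∧ f S ≤ c₂ * S ^ M) :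
    Tendsto (fun S => log (f S) / log (1 + S)) atTop (𝓝 M) := by
  refine tendsto_div_of_isBigO_sub_mul
    (tendsto_log_atTop.comp (tendsto_atTop_add_const_left _ 1 tendsto_id)) ?_
  have hpow : (fun S => log (f S) - log (S ^ M)) =O[atTop] fun _ => (1 : ℝ) := by
    refine isBigO_log_sub_log_of_le_of_le (c₂ := c₂) hc₁ ?_
    filter_upwards [hf, eventually_gt_atTop 0] with S hfS hS
    exact ⟨rpow_pos_of_pos hS M, hfS⟩
  have hshift := (tendsto_log_one_add_sub_log.isBigO_one ℝ).const_mul_left M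
  refine (hpow.sub hshift).congr' ?_ EventuallyEq.rfl
  filter_upwards [eventually_gt_atTop 0] with S hS
  rw [log_rpow hS]
  ring

theorem rpow_max_one_le_one_add_add_rpow {S : ℝ} (hS : 1 ≤ S) (γ : ℝ) :
    S ^ max 1 γ ≤ 1 + S + S ^ γ := by
  have hγ : 0 ≤ S ^ γ := rpow_nonneg (by linarith) γ
  rcases max_cases 1 γ with ⟨h, _⟩ | ⟨h, _⟩
  · rw [h, rpow_one]; linarith
  · rw [h]; linarith

theorem one_add_add_rpow_le_rpow_max_one {S : ℝ} (hS : 1 ≤ S) (γ : ℝ) :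
    1 + S + S ^ γ ≤ 3 * S ^ max 1 γ := by
  have h₁ : (1 : ℝ) ≤ S ^ max 1 γ := one_le_rpow hS (zero_le_one.trans (le_max_left _ _))
  have h₂ : S ≤ S ^ max 1 γ := by
    simpa using rpow_le_rpow_of_exponent_le hS (le_max_left 1 γ)
  have h₃ : S ^ γ ≤ S ^ max 1 γ := rpow_le_rpow_of_exponent_le hS (le_max_right 1 γ)
  linarith

theorem add_le_sqrt_add_sqrt_sq {a b : ℝ} (ha : 0 ≤ a) (hb : 0 ≤ b) :
    a + b ≤ (√a + √b) ^ 2 := by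
  nlinarith [sq_sqrt ha, sq_sqrt hb, sqrt_nonneg a, sqrt_nonneg b]

theorem sqrt_add_sqrt_sq_le {a b : ℝ} (ha : 0 ≤ a) (hb : 0 ≤ b) :
    (√a + √b) ^ 2 ≤ 2 * (a + b) := by
  nlinarith [sq_sqrt ha, sq_sqrt hb, sq_nonneg (√a - √b)]

theorem tendsto_log_one_add_sqrt_add_sqrt_rpow_sq_div (α : ℝ) :
    Tendsto (fun S => log (1 + (√S + √(S ^ α)) ^ 2) / log (1 + S)) atTop (𝓝 (max 1 α)) := by
  refine tendsto_log_div_log_one_add_of_le_of_le (c₁ := 1) (c₂ := 6) one_pos ?_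
  filter_upwards [eventually_ge_atTop 1] with S hS
  have hSα : 0 ≤ S ^ α := rpow_nonneg (by linarith) α
  have hlow := add_le_sqrt_add_sqrt_sq (by linarith : (0 : ℝ) ≤ S) hSα
  have hhigh := sqrt_add_sqrt_sq_le (by linarith : (0 : ℝ) ≤ S) hSα
  have := rpow_max_one_le_one_add_add_rpow hS α
  have := one_add_add_rpow_le_rpow_max_one hS α
  constructor <;> linarith

theorem tendsto_log_one_add_rpow_add_div (β : ℝ) :
    Tendsto (fun S => log (1 + S ^ β + S) / log (1 + S)) atTop (𝓝 (max 1 β)) := by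
  refine tendsto_log_div_log_one_add_of_le_of_le (c₁ := 1) (c₂ := 3) one_pos ?_
  filter_upwards [eventually_ge_atTop 1] with S hS
  have := rpow_max_one_le_one_add_add_rpow hS β
  have := one_add_add_rpow_le_rpow_max_one hS β
  constructor <;> linarith

open Filter in
theorem stmt_17_general (α β : ℝ) :
    Tendsto (fun S : ℝ =>
        min (Real.logb 2 (1 + (Real.sqrt S + Real.sqrt (S ^ α)) ^ 2))
            (Real.logb 2 (1 + S ^ β + S)) / Real.logb 2 (1 + S))
      atTop (nhds (max 1 (min α β))) := by
  rw [max_min_distrib_left]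
  refine ((tendsto_log_one_add_sqrt_add_sqrt_rpow_sq_div α).min
    (tendsto_log_one_add_rpow_add_div β)).congr' ?_
  filter_upwards [eventually_gt_atTop 0] with S hS
  have hlog : 0 < log (1 + S) := log_pos (by linarith)
  simp only [logb]
  rw [min_div_div_right (log_pos one_lt_two).le, min_div_div_right hlog.le,
    div_div_div_cancel_right₀ (log_pos one_lt_two).ne']

open Filter in
theorem stmt_17 (α β : ℝ) (hα : 0 ≤ α) (hβ : 0 ≤ β) :
    Tendsto (fun S : ℝ =>
        min (Real.logb 2 (1 + (Real.sqrt S + Real.sqrt (S ^ α)) ^ 2))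
            (Real.logb 2 (1 + S ^ β + S)) / Real.logb 2 (1 + S))
      atTop (nhds (max 1 (min α β))) :=
  stmt_17_general α β
end

section
/- Let α ≥ 0, β ≥ 0 be fixed. Then the limit as S → ∞ of [ log₂((1 + S^β + max(S, S^α))/(1 + S^α)) + log₂(1 + (√(S^α) + √S)²) ] / log₂(1 + S) equals max(β, α, 1) − α + max(α, 1). -/
open Filter Real

lemma aux_log_ratio (γ c C : ℝ) (hc : 0 < c) (hC : 0 < C) (g : ℝ → ℝ)
    (h : ∀ᶠ S in atTop, c * S ^ γ ≤ g S ∧ g S ≤ C * S ^ γ) :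
    Tendsto (fun S => Real.log (g S) / Real.log S) atTop (nhds γ) := by
  have hlo : Tendsto (fun S : ℝ => Real.log c / Real.log S + γ) atTop (nhds γ) := by
    simpa using (tendsto_const_nhds.div_atTop Real.tendsto_log_atTop).add
      (tendsto_const_nhds : Tendsto (fun _ : ℝ => γ) atTop (nhds γ))
  have hhi : Tendsto (fun S : ℝ => Real.log C / Real.log S + γ) atTop (nhds γ) := by
    simpa using (tendsto_const_nhds.div_atTop Real.tendsto_log_atTop).add
      (tendsto_const_nhds : Tendsto (fun _ : ℝ => γ) atTop (nhds γ))
  refine tendsto_of_tendsto_of_tendsto_of_le_of_le' hlo hhi ?_ ?_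
  · filter_upwards [h, eventually_gt_atTop (1 : ℝ)] with S hS hS1
    have hSpos : (0:ℝ) < S := lt_trans one_pos hS1
    have hlogS : 0 < Real.log S := Real.log_pos hS1
    have hrp : 0 < S ^ γ := Real.rpow_pos_of_pos hSpos γ
    have hg : 0 < g S := lt_of_lt_of_le (by positivity) hS.1
    have h1 : Real.log c + γ * Real.log S ≤ Real.log (g S) := by
      have := Real.log_le_log (by positivity) hS.1
      rwa [Real.log_mul (ne_of_gt hc) (ne_of_gt hrp), Real.log_rpow hSpos] at this
    rw [div_add' _ _ _ (ne_of_gt hlogS)]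
    gcongr
  · filter_upwards [h, eventually_gt_atTop (1 : ℝ)] with S hS hS1
    have hSpos : (0:ℝ) < S := lt_trans one_pos hS1
    have hlogS : 0 < Real.log S := Real.log_pos hS1
    have hrp : 0 < S ^ γ := Real.rpow_pos_of_pos hSpos γ
    have hg : 0 < g S := lt_of_lt_of_le (by positivity) hS.1
    have h1 : Real.log (g S) ≤ Real.log C + γ * Real.log S := by
      have := Real.log_le_log hg hS.2
      rwa [Real.log_mul (ne_of_gt hC) (ne_of_gt hrp), Real.log_rpow hSpos] at this
    rw [div_add' _ _ _ (ne_of_gt hlogS)]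
    gcongr

lemma aux_log_ratio' (γ c C : ℝ) (hc : 0 < c) (hC : 0 < C) (g : ℝ → ℝ)
    (h : ∀ᶠ S in atTop, c * S ^ γ ≤ g S ∧ g S ≤ C * S ^ γ) :
    Tendsto (fun S => Real.log (g S) / Real.log (1 + S)) atTop (nhds γ) := by
  have h1 : Tendsto (fun S : ℝ => Real.log (1 + S) / Real.log S) atTop (nhds 1) := by
    have := aux_log_ratio 1 1 2 one_pos two_pos (fun S => 1 + S) ?_
    · simpa using this
    · filter_upwards [eventually_ge_atTop (1 : ℝ)] with S hS
      rw [Real.rpow_one]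
      constructor <;> nlinarith
  have h2 : Tendsto (fun S : ℝ => Real.log S / Real.log (1 + S)) atTop (nhds 1) := by
    have := h1.inv₀ one_ne_zero
    simp only [inv_div] at this
    simpa using this
  have h3 := (aux_log_ratio γ c C hc hC g h).mul h2
  rw [mul_one] at h3
  refine h3.congr' ?_
  filter_upwards [eventually_gt_atTop (1 : ℝ)] with S hS1
  have hlogS : Real.log S ≠ 0 := ne_of_gt (Real.log_pos hS1)
  field_simp

open Filter in
theorem stmt_18 (α β : ℝ) (hα : 0 ≤ α) (hβ : 0 ≤ β) :
    Tendsto (fun S : ℝ =>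
        (Real.logb 2 ((1 + S ^ β + max S (S ^ α)) / (1 + S ^ α))
          + Real.logb 2 (1 + (Real.sqrt (S ^ α) + Real.sqrt S) ^ 2))
          / Real.logb 2 (1 + S))
      atTop (nhds (max β (max α 1) - α + max α 1)) := by
  set m1 := max β (max α 1) with hm1
  set m := max α 1 with hm
  have hm1_nonneg : (0:ℝ) ≤ m1 := le_trans zero_le_one (le_trans (le_max_right α 1) (le_max_right β _))
  -- key bounds
  have hN : ∀ᶠ S in atTop, (1:ℝ) * S ^ m1 ≤ 1 + S ^ β + max S (S ^ α) ∧
      1 + S ^ β + max S (S ^ α) ≤ 3 * S ^ m1 := by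
    filter_upwards [eventually_ge_atTop (1 : ℝ)] with S hS
    have hS0 : (0:ℝ) < S := lt_of_lt_of_le one_pos hS
    have h1 : (1:ℝ) ≤ S ^ m1 := Real.one_le_rpow hS hm1_nonneg
    have hβle : S ^ β ≤ S ^ m1 := Real.rpow_le_rpow_of_exponent_le hS (le_max_left _ _)
    have hαle : S ^ α ≤ S ^ m1 := Real.rpow_le_rpow_of_exponent_le hS (le_trans (le_max_left α 1) (le_max_right β _))
    have hSle : S ≤ S ^ m1 := by
      have := Real.rpow_le_rpow_of_exponent_le hS (le_trans (le_max_right α 1) (le_max_right β _))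
      rwa [Real.rpow_one] at this
    have hβ0 : (0:ℝ) ≤ S ^ β := le_of_lt (Real.rpow_pos_of_pos hS0 β)
    have hmaxge : S ^ m1 ≤ 1 + S ^ β + max S (S ^ α) := by
      rcases max_choice β (max α 1) with h | h
      · rw [← hm1] at h; rw [h]; nlinarith [le_max_left S (S^α)]
      · rw [← hm1] at h
        rcases max_choice α 1 with h2 | h2
        · rw [h2] at h; rw [h]
          have := le_max_right S (S ^ α); nlinarith
        · rw [h2] at h; rw [h, Real.rpow_one]
          have := le_max_left S (S ^ α); nlinarith
    refine ⟨by linarith, ?_⟩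
    have := max_le hSle hαle
    linarith
  have hA : ∀ᶠ S in atTop, (1:ℝ) * S ^ α ≤ 1 + S ^ α ∧ 1 + S ^ α ≤ 2 * S ^ α := by
    filter_upwards [eventually_ge_atTop (1 : ℝ)] with S hS
    have h1 : (1:ℝ) ≤ S ^ α := Real.one_le_rpow hS hα
    constructor <;> linarith
  have hD : ∀ᶠ S in atTop, (1:ℝ) * S ^ m ≤ 1 + (Real.sqrt (S ^ α) + Real.sqrt S) ^ 2 ∧
      1 + (Real.sqrt (S ^ α) + Real.sqrt S) ^ 2 ≤ 5 * S ^ m := by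
    filter_upwards [eventually_ge_atTop (1 : ℝ)] with S hS
    have hS0 : (0:ℝ) < S := lt_of_lt_of_le one_pos hS
    have hα0 : (0:ℝ) ≤ S ^ α := le_of_lt (Real.rpow_pos_of_pos hS0 α)
    have hsq1 : Real.sqrt (S ^ α) ^ 2 = S ^ α := Real.sq_sqrt hα0
    have hsq2 : Real.sqrt S ^ 2 = S := Real.sq_sqrt (le_of_lt hS0)
    have hαle : S ^ α ≤ S ^ m := Real.rpow_le_rpow_of_exponent_le hS (le_max_left α 1)
    have hSle : S ≤ S ^ m := by
      have := Real.rpow_le_rpow_of_exponent_le hS (le_max_right α 1)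
      rwa [Real.rpow_one] at this
    have h1 : (1:ℝ) ≤ S ^ m := le_trans hS hSle
    have hs1 : (0:ℝ) ≤ Real.sqrt (S ^ α) := Real.sqrt_nonneg _
    have hs2 : (0:ℝ) ≤ Real.sqrt S := Real.sqrt_nonneg _
    constructor
    · rcases max_choice α 1 with h2 | h2
      · rw [← hm] at h2; rw [h2]; nlinarith
      · rw [← hm] at h2; rw [h2, Real.rpow_one]; nlinarith
    · nlinarith [sq_nonneg (Real.sqrt (S ^ α) - Real.sqrt S)]
  have TN := aux_log_ratio' m1 1 3 one_pos (by norm_num)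
      (fun S => 1 + S ^ β + max S (S ^ α)) hN
  have TA := aux_log_ratio' α 1 2 one_pos two_pos (fun S => 1 + S ^ α) hA
  have TD := aux_log_ratio' m 1 5 one_pos (by norm_num)
      (fun S => 1 + (Real.sqrt (S ^ α) + Real.sqrt S) ^ 2) hD
  have T := (TN.sub TA).add TD
  refine T.congr' ?_
  filter_upwards [eventually_ge_atTop (1 : ℝ)] with S hS
  have hS0 : (0:ℝ) < S := lt_of_lt_of_le one_pos hS
  have hα0 : (0:ℝ) < S ^ α := Real.rpow_pos_of_pos hS0 α
  have hβ0 : (0:ℝ) < S ^ β := Real.rpow_pos_of_pos hS0 β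
  have hNpos : (0:ℝ) < 1 + S ^ β + max S (S ^ α) := by
    have := le_max_left S (S ^ α); nlinarith
  have hApos : (0:ℝ) < 1 + S ^ α := by linarith
  have hlog1S : (0:ℝ) < Real.log (1 + S) := Real.log_pos (by linarith)
  have hlog2 : Real.log 2 ≠ 0 := ne_of_gt (Real.log_pos one_lt_two)
  simp only [Real.logb, Real.log_div (ne_of_gt hNpos) (ne_of_gt hApos)]
  field_simp
end

section
/- For all real numbers Sc, Ip ≥ 0 and every γ with 0 ≤ γ ≤ 1: log₂(1 + (1−γ²)·Sc) − log₂(1 + (1−γ²)·Sc/(1 + Ip/(1+Ip))) ≤ 1. -/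
theorem stmt_19 (Sc Ip γ : ℝ) (hSc : 0 ≤ Sc) (hIp : 0 ≤ Ip)
    (hγ0 : 0 ≤ γ) (hγ1 : γ ≤ 1) :
    Real.logb 2 (1 + (1 - γ ^ 2) * Sc)
      - Real.logb 2 (1 + (1 - γ ^ 2) * Sc / (1 + Ip / (1 + Ip))) ≤ 1 := by
  set x := (1 - γ ^ 2) * Sc with hx
  have hx0 : 0 ≤ x := by
    apply mul_nonneg _ hSc
    nlinarith
  have hIp1 : (0:ℝ) < 1 + Ip := by linarith
  set d := 1 + Ip / (1 + Ip) with hd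
  have hd1 : 1 ≤ d := by
    have h : 0 ≤ Ip / (1 + Ip) := div_nonneg hIp hIp1.le
    rw [hd]; linarith
  have hd2 : d ≤ 2 := by
    have : Ip / (1 + Ip) ≤ 1 := by
      rw [div_le_one hIp1]; linarith
    rw [hd]; linarith
  have hd0 : (0:ℝ) < d := by linarith
  have key : 1 + x ≤ 2 * (1 + x / d) := by
    have hxd : x ≤ 2 * (x / d) := by
      rw [mul_div_assoc', le_div_iff₀ hd0]
      nlinarith
    linarith
  have h1 : Real.logb 2 (1 + x) ≤ Real.logb 2 (2 * (1 + x / d)) := by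
    apply Real.logb_le_logb_of_le (by norm_num) (by linarith) key
  have h2 : Real.logb 2 (2 * (1 + x / d)) = 1 + Real.logb 2 (1 + x / d) := by
    rw [Real.logb_mul (by norm_num) (by positivity), Real.logb_self_eq_one] <;> norm_num
  linarith
end
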